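/- Let Õ : [0,1) → [0,1) be the interval realization of the dyadic odometer, defined by Õ(x) = x + 3/2^n − 1 for x ∈ I_n = [(2^{n−1}−1)/2^{n−1}, (2^n−1)/2^n), n ∈ ℕ. Then the map n ↦ Õ^n(1/2) is a bijection between ℕ ∪ {0} and the set of dyadic rational numbers in (0,1): the orbit of 1/2 under Õ passes through every dyadic rational in (0,1) exactly once. -/

import Mathlib

/-!
On binary expansions `Õ` is the odometer "add one, carrying to the right": it adds `1/2` on
`[0, 1/2)`, and `Õ ((1 + y) / 2) = Õ y / 2` carries the digit. So `Õ` steps the van der Corput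
sequence (the binary digits of `n` reflected about the binary point) from its `n`-th term to its
`(n+1)`-st, and the orbit of `1/2` is its tail from `n = 1`. That sequence is a bijection from `ℕ`
onto the dyadic rationals in `[0, 1)`, and only `n = 0` goes to `0`.
-/

/-- The interval realization of the dyadic odometer: `Õ(x) = x + 3/2^n − 1` on
`I_n = [(2^{n−1}−1)/2^{n−1}, (2^n−1)/2^n)`; for `x ∈ I_n` one has
`n = Int.log 2 (1/(1−x)) + 1`. -/
noncomputable def dyadicIntervalOdometer (x : ℝ) : ℝ :=
  x + 3 / (2 : ℝ) ^ (Int.log 2 (1 / (1 - x)) + 1) - 1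

namespace Int

variable {R : Type*} [Semifield R] [LinearOrder R] [IsStrictOrderedRing R] [FloorSemiring R]

theorem log_eq_of_zpow_le_of_lt_zpow {b : ℕ} (hb : 1 < b) {n : ℤ} {r : R}
    (h₁ : (b : R) ^ n ≤ r) (h₂ : r < (b : R) ^ (n + 1)) : log b r = n := by
  have hr : 0 < r := lt_of_lt_of_le (zpow_pos (by exact_mod_cast (zero_lt_one.trans hb)) n) h₁
  have := (zpow_le_iff_le_log hb hr).1 h₁
  have := (lt_zpow_iff_log_lt hb hr).1 h₂
  omega

theorem log_mul_base {b : ℕ} (hb : 1 < b) {r : R} (hr : 0 < r) :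
    log b (b * r) = log b r + 1 := by
  have hb₀ : (0 : R) < b := by exact_mod_cast (zero_lt_one.trans hb)
  apply log_eq_of_zpow_le_of_lt_zpow hb
  · rw [zpow_add_one₀ hb₀.ne', mul_comm (b : R) r]
    exact mul_le_mul_of_nonneg_right (zpow_log_le_self hb hr) hb₀.le
  · rw [zpow_add_one₀ hb₀.ne', mul_comm (b : R) r]
    exact mul_lt_mul_of_pos_right (lt_zpow_succ_log_self hb r) hb₀

end Int

theorem dyadicIntervalOdometer_of_lt_half {x : ℝ} (h₀ : 0 ≤ x) (h₁ : x < 1 / 2) :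
    dyadicIntervalOdometer x = x + 1 / 2 := by
  have hx : 0 < 1 - x := by linarith
  have hlog : Int.log 2 (1 / (1 - x)) = 0 := by
    apply Int.log_eq_of_zpow_le_of_lt_zpow one_lt_two
    · rw [zpow_zero, le_div_iff₀ hx]; linarith
    · rw [zero_add, zpow_one, div_lt_iff₀ hx]; push_cast; linarith
  rw [dyadicIntervalOdometer, hlog]
  norm_num
  ring

theorem dyadicIntervalOdometer_one_add_div_two {y : ℝ} (h₁ : y < 1) :
    dyadicIntervalOdometer ((1 + y) / 2) = dyadicIntervalOdometer y / 2 := by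
  have hlog : Int.log 2 (1 / (1 - (1 + y) / 2)) = Int.log 2 (1 / (1 - y)) + 1 := by
    have h := Int.log_mul_base one_lt_two (one_div_pos.2 (sub_pos.2 h₁))
    rw [Nat.cast_ofNat, mul_one_div, ← one_div_div] at h
    rwa [show 1 - (1 + y) / 2 = (1 - y) / 2 by ring]
  rw [dyadicIntervalOdometer, dyadicIntervalOdometer, hlog, zpow_add_one₀ two_ne_zero]
  field_simp
  ring

noncomputable def vanDerCorput : ℕ → ℝ :=
  Nat.evenOddRec 0 (fun _ r => r / 2) (fun _ r => (1 + r) / 2)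

@[simp]
theorem vanDerCorput_zero : vanDerCorput 0 = 0 :=
  Nat.evenOddRec_zero ..

theorem vanDerCorput_two_mul (n : ℕ) : vanDerCorput (2 * n) = vanDerCorput n / 2 :=
  Nat.evenOddRec_even _ _ _ (zero_div 2) n

theorem vanDerCorput_two_mul_add_one (n : ℕ) :
    vanDerCorput (2 * n + 1) = (1 + vanDerCorput n) / 2 :=
  Nat.evenOddRec_odd _ _ _ (zero_div 2) n

theorem vanDerCorput_one : vanDerCorput 1 = 1 / 2 := by
  simpa using vanDerCorput_two_mul_add_one 0

theorem vanDerCorput_mem_Ico (n : ℕ) : vanDerCorput n ∈ Set.Ico 0 1 := by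
  induction n using Nat.evenOddRec with
  | h0 => simp
  | h_even n ih =>
    rw [vanDerCorput_two_mul]
    exact ⟨by linarith [ih.1], by linarith [ih.2]⟩
  | h_odd n ih =>
    rw [vanDerCorput_two_mul_add_one]
    exact ⟨by linarith [ih.1], by linarith [ih.2]⟩

theorem vanDerCorput_eq_zero_iff {n : ℕ} : vanDerCorput n = 0 ↔ n = 0 := by
  refine ⟨fun h => ?_, fun h => h ▸ vanDerCorput_zero⟩
  induction n using Nat.evenOddRec with
  | h0 => rfl
  | h_even n ih =>
    rw [vanDerCorput_two_mul, div_eq_zero_iff] at h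
    simp [ih (h.resolve_right two_ne_zero)]
  | h_odd n ih =>
    rw [vanDerCorput_two_mul_add_one] at h
    linarith [(vanDerCorput_mem_Ico n).1]

theorem vanDerCorput_injective : Function.Injective vanDerCorput := by
  intro a
  induction a using Nat.evenOddRec with
  | h0 => exact fun b h => (vanDerCorput_eq_zero_iff.1 h.symm).symm
  | h_even n ih =>
    intro b h
    obtain ⟨k, rfl | rfl⟩ := Nat.even_or_odd' b
    · rw [vanDerCorput_two_mul, vanDerCorput_two_mul] at h
      rw [ih (by linarith)]
    · rw [vanDerCorput_two_mul, vanDerCorput_two_mul_add_one] at h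
      linarith [(vanDerCorput_mem_Ico n).2, (vanDerCorput_mem_Ico k).1]
  | h_odd n ih =>
    intro b h
    obtain ⟨k, rfl | rfl⟩ := Nat.even_or_odd' b
    · rw [vanDerCorput_two_mul_add_one, vanDerCorput_two_mul] at h
      linarith [(vanDerCorput_mem_Ico n).1, (vanDerCorput_mem_Ico k).2]
    · rw [vanDerCorput_two_mul_add_one, vanDerCorput_two_mul_add_one] at h
      rw [ih (by linarith)]

theorem exists_vanDerCorput_eq_div (n : ℕ) :
    ∃ p m : ℕ, p < 2 ^ m ∧ vanDerCorput n = p / 2 ^ m := by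
  induction n using Nat.evenOddRec with
  | h0 => exact ⟨0, 0, by simp, by simp⟩
  | h_even n ih =>
    obtain ⟨p, m, hpm, hn⟩ := ih
    refine ⟨p, m + 1, by rw [pow_succ]; omega, ?_⟩
    rw [vanDerCorput_two_mul, hn, pow_succ, div_div]
  | h_odd n ih =>
    obtain ⟨p, m, hpm, hn⟩ := ih
    refine ⟨2 ^ m + p, m + 1, by rw [pow_succ]; omega, ?_⟩
    rw [vanDerCorput_two_mul_add_one, hn]
    push_cast
    field_simp
    ring

theorem exists_vanDerCorput_eq_div_of_lt {p m : ℕ} (hpm : p < 2 ^ m) :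
    ∃ n, vanDerCorput n = p / 2 ^ m := by
  induction m generalizing p with
  | zero => exact ⟨0, by simp_all⟩
  | succ m ih =>
    rcases lt_or_ge p (2 ^ m) with hp | hp
    · obtain ⟨n, hn⟩ := ih hp
      refine ⟨2 * n, ?_⟩
      rw [vanDerCorput_two_mul, hn, pow_succ, div_div]
    · obtain ⟨n, hn⟩ := ih (p := p - 2 ^ m) (by rw [pow_succ] at hpm; omega)
      refine ⟨2 * n + 1, ?_⟩
      rw [vanDerCorput_two_mul_add_one, hn, Nat.cast_sub hp]
      push_cast
      field_simp
      ring

theorem dyadicIntervalOdometer_vanDerCorput (n : ℕ) :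
    dyadicIntervalOdometer (vanDerCorput n) = vanDerCorput (n + 1) := by
  induction n using Nat.evenOddRec with
  | h0 => simpa [vanDerCorput_one] using dyadicIntervalOdometer_of_lt_half le_rfl one_half_pos
  | h_even n ih =>
    have h := vanDerCorput_mem_Ico n
    rw [vanDerCorput_two_mul, vanDerCorput_two_mul_add_one,
      dyadicIntervalOdometer_of_lt_half (by linarith [h.1]) (by linarith [h.2])]
    ring
  | h_odd n ih =>
    rw [vanDerCorput_two_mul_add_one,
      dyadicIntervalOdometer_one_add_div_two (vanDerCorput_mem_Ico n).2, ih,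
      show 2 * n + 1 + 1 = 2 * (n + 1) by ring, vanDerCorput_two_mul]

theorem iterate_dyadicIntervalOdometer_half (n : ℕ) :
    dyadicIntervalOdometer^[n] (1 / 2) = vanDerCorput (n + 1) := by
  induction n with
  | zero => exact vanDerCorput_one.symm
  | succ n ih => rw [Function.iterate_succ_apply', ih, dyadicIntervalOdometer_vanDerCorput]

/-- The map `n ↦ Õ^n(1/2)` is a bijection between `ℕ ∪ {0}` and the dyadic
rationals in `(0,1)`: the orbit of `1/2` under `Õ` passes through every dyadic
rational `p/2^m`, `0 < p < 2^m`, exactly once. -/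
theorem dyadicIntervalOdometer_counts_dyadics :
    (Function.Injective fun n : ℕ => (dyadicIntervalOdometer)^[n] (1 / 2 : ℝ)) ∧
      Set.range (fun n : ℕ => (dyadicIntervalOdometer)^[n] (1 / 2 : ℝ)) =
        {x : ℝ | ∃ p m : ℕ, 0 < p ∧ p < 2 ^ m ∧ x = (p : ℝ) / 2 ^ m} := by
  have horbit : (fun n : ℕ => dyadicIntervalOdometer^[n] (1 / 2 : ℝ)) = vanDerCorput ∘ Nat.succ :=
    funext iterate_dyadicIntervalOdometer_half
  rw [horbit]
  refine ⟨vanDerCorput_injective.comp Nat.succ_injective, Set.ext fun x => ⟨?_, ?_⟩⟩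
  · rintro ⟨n, rfl⟩
    obtain ⟨p, m, hpm, hn⟩ := exists_vanDerCorput_eq_div (n + 1)
    refine ⟨p, m, Nat.pos_of_ne_zero fun hp => ?_, hpm, hn⟩
    rw [hp, Nat.cast_zero, zero_div, vanDerCorput_eq_zero_iff] at hn
    exact n.succ_ne_zero hn
  · rintro ⟨p, m, hp, hpm, rfl⟩
    obtain ⟨k, hk⟩ := exists_vanDerCorput_eq_div_of_lt hpm
    have hk₀ : k ≠ 0 := by
      rw [Ne, ← vanDerCorput_eq_zero_iff, hk]
      positivity
    obtain ⟨n, rfl⟩ := Nat.exists_eq_succ_of_ne_zero hk₀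
    exact ⟨n, hk⟩
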